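/- Let n, m be natural numbers, let k : Fin n → ℝ with k i > 0 for all i, c : Fin n → Fin m → ℝ, b : Fin n → ℝ, and x : Fin m → ℝ a valuation, and define s i = ∑ v, c i v * x v. Assume for every variable index v that ∑ i, k i * c i v = 0, and that ∑ i, k i * b i < 0. Let S₁, S₂ be disjoint finite subsets of Fin n with S₁ ∪ S₂ = Fin n (the full index set). Then it is not the case that both ∑_{i ∈ S₁} k i * s i ≤ ∑_{i ∈ S₁} k i * b i and ∑_{i ∈ S₂} k i * s i ≤ ∑_{i ∈ S₂} k i * b i hold. -/

import Mathlib

theorem farkas_tree_inductivity_full (n m : ℕ) (k : Fin n → ℝ) (hk : ∀ i, k i > 0)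
    (c : Fin n → Fin m → ℝ) (b : Fin n → ℝ) (x : Fin m → ℝ)
    (s : Fin n → ℝ) (hs : ∀ i, s i = ∑ v, c i v * x v)
    (hc : ∀ v, ∑ i, k i * c i v = 0) (hb : ∑ i, k i * b i < 0)
    (S₁ S₂ : Finset (Fin n)) (hdisj : Disjoint S₁ S₂)
    (hunion : S₁ ∪ S₂ = Finset.univ) :
    ¬ ((∑ i ∈ S₁, k i * s i ≤ ∑ i ∈ S₁, k i * b i) ∧
       (∑ i ∈ S₂, k i * s i ≤ ∑ i ∈ S₂, k i * b i)) := by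
  rintro ⟨h1, h2⟩
  have hks : ∑ i, k i * s i = 0 := by
    calc ∑ i, k i * s i = ∑ v, (∑ i, k i * c i v) * x v := by
          simp only [hs, Finset.mul_sum, Finset.sum_mul]
          rw [Finset.sum_comm]
          congr 1; ext i; congr 1; ext v; ring
      _ = 0 := by simp [hc]
  have hsplit : ∀ f : Fin n → ℝ, ∑ i, f i = ∑ i ∈ S₁, f i + ∑ i ∈ S₂, f i := by
    intro f
    rw [← Finset.sum_union hdisj, hunion]
  have e1 := hsplit (fun i => k i * s i)
  have e2 := hsplit (fun i => k i * b i)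
  linarith
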